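/- Let W be a best k-point approximation to a random element V in a separable Hilbert space, with support {y₁,...,y_k}, and let D_j be the domain of attraction of y_j. Then: (a) almost surely, W = Σ_j y_j·1_{V ∈ D_j}; (b) ‖V − W‖ ≤ ‖V − y_j‖ a.s. for every j; (c) E(V | W) = W a.s., i.e., W is self-consistent for V. -/

import Mathlib

open MeasureTheory ProbabilityTheory
open scoped RealInnerProductSpace

noncomputable section

variable {Ω : Type*} [MeasurableSpace Ω]

/-- `V` is an elliptical random element with location `μ0` and scatter operator `Γ`:
there is a characteristic generator `φ` such that every bounded linear image `B V` into a
Euclidean space has characteristic function `t ↦ φ (⟪t, B Γ B* t⟫)` after centering at `B μ0`. -/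
def IsElliptical {H : Type*} [NormedAddCommGroup H] [InnerProductSpace ℝ H] [CompleteSpace H]
    (P : Measure Ω) (V : Ω → H) (μ0 : H) (Γ : H →L[ℝ] H) : Prop :=
  ∃ φ : ℝ → ℂ, ∀ (d : ℕ) (B : H →L[ℝ] EuclideanSpace ℝ (Fin d))
    (t : EuclideanSpace ℝ (Fin d)),
    (∫ ω, Complex.exp (Complex.I * ((⟪t, B (V ω) - B μ0⟫ : ℝ) : ℂ)) ∂P)
      = φ (⟪t, (B ∘L Γ ∘L (ContinuousLinearMap.adjoint B)) t⟫ : ℝ)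

/-- `G` is the covariance operator of `V`: `⟪G u, v⟫ = Cov(⟪u, V⟫, ⟪v, V⟫)`. -/
def IsCovOp {H : Type*} [NormedAddCommGroup H] [InnerProductSpace ℝ H]
    (P : Measure Ω) (V : Ω → H) (G : H →L[ℝ] H) : Prop :=
  ∀ u v : H, (⟪G u, v⟫ : ℝ) =
    ∫ ω, ((⟪u, V ω⟫ : ℝ) - ∫ ω', (⟪u, V ω'⟫ : ℝ) ∂P)
        * ((⟪v, V ω⟫ : ℝ) - ∫ ω', (⟪v, V ω'⟫ : ℝ) ∂P) ∂P

/-- Domain of attraction of `y j` among the points `y 0, …, y (k-1)`, with ties assigned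
to the lowest index. -/
def attractionDomain {H : Type*} [NormedAddCommGroup H] {k : ℕ}
    (y : Fin k → H) (j : Fin k) : Set H :=
  {x | (∀ ℓ, ‖x - y j‖ ≤ ‖x - y ℓ‖) ∧ ∀ ℓ, ℓ < j → ‖x - y j‖ < ‖x - y ℓ‖}

/-- The points `y 0, …, y (k-1)` are self-consistent for `V`:
`E(V | V ∈ D_j) = y j` for each domain of attraction `D_j`. -/
def SelfConsistent {H : Type*} [NormedAddCommGroup H] [NormedSpace ℝ H] {k : ℕ}
    (P : Measure Ω) (V : Ω → H) (y : Fin k → H) : Prop :=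
  ∀ j, ∫ ω in V ⁻¹' attractionDomain y j, V ω ∂P
        = (P (V ⁻¹' attractionDomain y j)).toReal • y j

/-- The points `y 0, …, y (k-1)` are principal points of `V`: they minimize the expected
squared distance to the nearest of `k` points. -/
def IsPrincipal {H : Type*} [NormedAddCommGroup H] {k : ℕ}
    (P : Measure Ω) (V : Ω → H) (y : Fin k → H) : Prop :=
  ∀ z : Fin k → H,
    (∫ ω, (⨅ j, ‖V ω - y j‖) ^ 2 ∂P) ≤ ∫ ω, (⨅ j, ‖V ω - z j‖) ^ 2 ∂P

/-!
Replacing `W` by the nearest of the points `y j` to `V` cannot increase the distance to `V`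
anywhere, so optimality of `W` forces `‖V - W‖ = ‖V - nearestPoint y V‖` almost surely, and off
the null set of ties this means `W = nearestPoint y V`. For self-consistency, changing the value
of `W` on the atom `{W = y j}` to the mean of `V` over that atom lowers the risk by
`P(W = y j) ‖mean - y j‖²` (bias-variance decomposition), so optimality forces the mean to be
`y j`. An integrable `V` whose mean over every fibre of a finitely-valued `W` is the value of `W`
there has `E(V | W) = W`.
-/

section NearestPoint

variable {H : Type*} [NormedAddCommGroup H] {k : ℕ} (y : Fin k → H)

def nearestPoint (x : H) : H :=
  ∑ j, (attractionDomain y j).indicator (fun _ => y j) x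

theorem eq_of_mem_attractionDomain {x : H} {i j : Fin k} (hi : x ∈ attractionDomain y i)
    (hj : x ∈ attractionDomain y j) : i = j := by
  by_contra hij
  rcases lt_or_gt_of_ne hij with h | h
  · exact (hj.2 i h).not_ge (hi.1 j)
  · exact (hi.2 j h).not_ge (hj.1 i)

theorem exists_mem_attractionDomain [NeZero k] (x : H) : ∃ j, x ∈ attractionDomain y j := by
  classical
  obtain ⟨i, -, hi⟩ :=
    Finset.univ.exists_min_image (fun j => ‖x - y j‖) Finset.univ_nonempty
  -- among the nearest points, take the one of lowest index
  let T := Finset.univ.filter fun j => ‖x - y j‖ ≤ ‖x - y i‖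
  have hT : T.Nonempty := ⟨i, by simp [T]⟩
  have hmin : ‖x - y (T.min' hT)‖ ≤ ‖x - y i‖ := (Finset.mem_filter.1 (T.min'_mem hT)).2
  refine ⟨T.min' hT, fun ℓ => hmin.trans (hi ℓ (Finset.mem_univ ℓ)), fun ℓ hℓ => ?_⟩
  by_contra! hle
  exact hℓ.not_ge (T.min'_le ℓ (by simpa [T] using hle.trans hmin))

theorem nearestPoint_eq_of_mem {x : H} {j : Fin k} (hx : x ∈ attractionDomain y j) :
    nearestPoint y x = y j := by
  classical
  rw [nearestPoint, Finset.sum_eq_single j (fun i _ hij => Set.indicator_of_notMem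
    (fun hi => hij (eq_of_mem_attractionDomain y hi hx)) _) (by simp),
    Set.indicator_of_mem hx]

theorem nearestPoint_mem_image [NeZero k] [DecidableEq H] (x : H) :
    nearestPoint y x ∈ Finset.univ.image y := by
  obtain ⟨j, hj⟩ := exists_mem_attractionDomain y x
  rw [nearestPoint_eq_of_mem y hj]
  exact Finset.mem_image_of_mem y (Finset.mem_univ j)

theorem norm_sub_nearestPoint_le [NeZero k] (x : H) (j : Fin k) :
    ‖x - nearestPoint y x‖ ≤ ‖x - y j‖ := by
  obtain ⟨i, hi⟩ := exists_mem_attractionDomain y x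
  rw [nearestPoint_eq_of_mem y hi]
  exact hi.1 j

theorem nearestPoint_eq_of_norm_sub_le [NeZero k] {x : H}
    (hties : ¬∃ i j, i ≠ j ∧ ‖x - y i‖ = ‖x - y j‖) {i : Fin k}
    (h : ‖x - y i‖ ≤ ‖x - nearestPoint y x‖) : nearestPoint y x = y i := by
  obtain ⟨j, hj⟩ := exists_mem_attractionDomain y x
  rw [nearestPoint_eq_of_mem y hj] at h ⊢
  obtain rfl : i = j := by_contra fun hij => hties ⟨i, j, hij, le_antisymm h (hj.1 i)⟩
  rfl

variable [MeasurableSpace H] [OpensMeasurableSpace H]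

theorem measurableSet_attractionDomain (j : Fin k) : MeasurableSet (attractionDomain y j) := by
  have hdist : ∀ i, Measurable fun x : H => ‖x - y i‖ := fun i =>
    (by fun_prop : Continuous fun x : H => ‖x - y i‖).measurable
  simp only [attractionDomain, Set.ofPred_and, Set.ofPred_forall]
  exact (MeasurableSet.iInter fun ℓ => measurableSet_le (hdist j) (hdist ℓ)).inter
    (MeasurableSet.iInter fun ℓ => MeasurableSet.iInter fun _ =>
      measurableSet_lt (hdist j) (hdist ℓ))

theorem measurable_nearestPoint [MeasurableAdd₂ H] : Measurable (nearestPoint y) :=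
  Finset.measurable_sum _ fun j _ =>
    measurable_const.indicator (measurableSet_attractionDomain y j)

end NearestPoint

section L2

variable {α E : Type*} [MeasurableSpace α] {μ : Measure α} [NormedAddCommGroup E]

theorem memLp_of_forall_mem_finset [IsFiniteMeasure μ] {Z : α → E}
    (hZ : AEStronglyMeasurable Z μ) {S : Finset E} (hS : ∀ a, Z a ∈ S) (p : ENNReal) :
    MemLp Z p μ :=
  MemLp.of_bound hZ (∑ v ∈ S, ‖v‖) (ae_of_all _ fun a =>
    Finset.single_le_sum (f := fun v => ‖v‖) (fun v _ => norm_nonneg v) (hS a))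

theorem integrable_norm_sub_sq [IsFiniteMeasure μ] {V Z : α → E} (hV : MemLp V 2 μ)
    (hZ : AEStronglyMeasurable Z μ) {S : Finset E} (hS : ∀ a, Z a ∈ S) :
    Integrable (fun a => ‖V a - Z a‖ ^ 2) μ :=
  (memLp_two_iff_integrable_sq_norm (hV.1.sub hZ)).1
    (hV.sub (memLp_of_forall_mem_finset hZ hS 2))

theorem setIntegral_le_of_integral_le_piecewise {f g : α → ℝ} {s : Set α}
    [DecidablePred (· ∈ s)] (hs : MeasurableSet s) (hf : Integrable f μ)
    (hg : IntegrableOn g s μ) (h : ∫ a, f a ∂μ ≤ ∫ a, s.piecewise g f a ∂μ) :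
    ∫ a in s, f a ∂μ ≤ ∫ a in s, g a ∂μ := by
  rw [integral_piecewise hs hg hf.integrableOn, ← integral_add_compl hs hf] at h
  linarith

variable [InnerProductSpace ℝ E] [CompleteSpace E]

theorem integral_norm_sub_sq_eq [IsFiniteMeasure μ] {V : α → E} (hV : MemLp V 2 μ) (b : E) :
    ∫ a, ‖V a - b‖ ^ 2 ∂μ
      = ∫ a, ‖V a - ⨍ x, V x ∂μ‖ ^ 2 ∂μ + μ.real Set.univ * ‖(⨍ x, V x ∂μ) - b‖ ^ 2 := by
  set m := ⨍ x, V x ∂μ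
  have hVm : Integrable (fun a => V a - m) μ :=
    (hV.integrable one_le_two).sub (integrable_const m)
  have hcross : ∫ a, ⟪m - b, V a - m⟫ ∂μ = 0 := by
    rw [integral_inner hVm, integral_sub_average, inner_zero_right]
  have hsq : Integrable (fun a => ‖V a - m‖ ^ 2) μ :=
    integrable_norm_sub_sq hV aestronglyMeasurable_const (fun _ => Finset.mem_singleton_self m)
  have hlin : Integrable (fun a => 2 * ⟪m - b, V a - m⟫) μ :=
    (hVm.const_inner (m - b)).const_mul 2
  have hsum : Integrable (fun a => ‖V a - m‖ ^ 2 + 2 * ⟪m - b, V a - m⟫) μ := hsq.add hlin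
  calc ∫ a, ‖V a - b‖ ^ 2 ∂μ
      = ∫ a, (‖V a - m‖ ^ 2 + 2 * ⟪m - b, V a - m⟫ + ‖m - b‖ ^ 2) ∂μ := by
        congr 1 with a
        rw [← sub_add_sub_cancel (V a) m b, norm_add_sq_real, real_inner_comm]
    _ = ∫ a, ‖V a - m‖ ^ 2 ∂μ + μ.real Set.univ * ‖m - b‖ ^ 2 := by
        rw [integral_add hsum (integrable_const _), integral_add hsq hlin, integral_const_mul,
          hcross, integral_const, smul_eq_mul]
        ring

theorem eq_setAverage_of_setIntegral_norm_sub_sq_le [IsFiniteMeasure μ] {V : α → E}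
    (hV : MemLp V 2 μ) {s : Set α} (hs : μ s ≠ 0) {b : E}
    (h : ∫ a in s, ‖V a - b‖ ^ 2 ∂μ ≤ ∫ a in s, ‖V a - ⨍ x in s, V x ∂μ‖ ^ 2 ∂μ) :
    b = ⨍ x in s, V x ∂μ := by
  rw [integral_norm_sub_sq_eq (hV.restrict s) b, measureReal_restrict_apply_univ] at h
  have hpos : 0 < μ.real s := ENNReal.toReal_pos hs (measure_ne_top μ s)
  have hsq : ‖(⨍ x in s, V x ∂μ) - b‖ ^ 2 ≤ 0 :=
    nonpos_of_mul_nonpos_right (by linarith) hpos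
  exact (norm_sub_eq_zero_iff.1 ((sq_nonpos_iff _).1 hsq)).symm

theorem condExp_comap_eq_of_setIntegral_preimage_singleton [IsFiniteMeasure μ]
    [MeasurableSpace E] [BorelSpace E] [SecondCountableTopology E] {V W : α → E}
    (hV : Integrable V μ) (hW : Measurable W) {S : Finset E} (hS : ∀ a, W a ∈ S)
    (hfiber : ∀ v ∈ S, ∫ a in W ⁻¹' {v}, V a ∂μ = μ.real (W ⁻¹' {v}) • v) :
    μ[V | MeasurableSpace.comap W inferInstance] =ᵐ[μ] W := by
  classical
  have hWint : Integrable W μ :=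
    memLp_one_iff_integrable.1 (memLp_of_forall_mem_finset hW.aestronglyMeasurable hS 1)
  have hfib : ∀ v, MeasurableSet (W ⁻¹' {v}) := fun v => hW (measurableSet_singleton v)
  refine (ae_eq_condExp_of_forall_setIntegral_eq hW.comap_le hV (fun _ _ _ => hWint.integrableOn)
    ?_ (Measurable.of_comap_le le_rfl).aestronglyMeasurable).symm
  rintro _ ⟨B, -, rfl⟩ -
  have hunion : W ⁻¹' B = ⋃ v ∈ S.filter (· ∈ B), W ⁻¹' {v} := by
    ext a
    simp [hS a]
  have hdisj : Set.Pairwise ↑(S.filter (· ∈ B)) (Function.onFun Disjoint fun v => W ⁻¹' {v}) :=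
    fun v _ w _ hvw => (Set.disjoint_singleton.2 hvw).preimage W
  rw [hunion,
    integral_biUnion_finset _ (fun v _ => hfib v) hdisj fun _ _ => hWint.integrableOn,
    integral_biUnion_finset _ (fun v _ => hfib v) hdisj fun _ _ => hV.integrableOn]
  refine Finset.sum_congr rfl fun v hv => ?_
  rw [hfiber v (Finset.mem_filter.1 hv).1, setIntegral_congr_fun (hfib v) fun a ha => ha,
    setIntegral_const]

end L2

section BestApproximation

variable {H : Type*} [NormedAddCommGroup H] [MeasurableSpace H]

def IsBestApprox (P : Measure Ω) (V W : Ω → H) (k : ℕ) : Prop :=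
  ∀ Z : Ω → H, Measurable Z → (∃ S : Finset H, S.card ≤ k ∧ ∀ ω, Z ω ∈ S) →
    ∫ ω, ‖V ω - W ω‖ ^ 2 ∂P ≤ ∫ ω, ‖V ω - Z ω‖ ^ 2 ∂P

variable [BorelSpace H] [SecondCountableTopology H] {P : Measure Ω} [IsFiniteMeasure P]
  {V W : Ω → H} {k : ℕ}

theorem IsBestApprox.ae_eq_nearestPoint [NeZero k] (hbest : IsBestApprox P V W k)
    (hV : MemLp V 2 P) (hmeasV : Measurable V) (hmeasW : Measurable W) {y : Fin k → H}
    (hWy : ∀ ω, W ω ∈ Set.range y)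
    (hties : ∀ᵐ ω ∂P, ¬∃ i j, i ≠ j ∧ ‖V ω - y i‖ = ‖V ω - y j‖) :
    ∀ᵐ ω ∂P, W ω = nearestPoint y (V ω) := by
  classical
  have hWint := integrable_norm_sub_sq hV hmeasW.aestronglyMeasurable fun ω =>
    mem_image_univ_iff_mem_range.2 (hWy ω)
  have hnm : Measurable (nearestPoint y ∘ V) := (measurable_nearestPoint y).comp hmeasV
  have hnint := integrable_norm_sub_sq hV hnm.aestronglyMeasurable fun ω =>
    nearestPoint_mem_image y (V ω)
  have hcloser : ∀ ω, ‖V ω - nearestPoint y (V ω)‖ ^ 2 ≤ ‖V ω - W ω‖ ^ 2 := fun ω => by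
    obtain ⟨j, hj⟩ := hWy ω
    rw [← hj]
    gcongr
    exact norm_sub_nearestPoint_le y (V ω) j
  have hsq_eq := (integral_eq_iff_of_ae_le hnint hWint (ae_of_all _ hcloser)).1
    ((integral_mono hnint hWint hcloser).antisymm (hbest _ hnm
      ⟨_, Finset.card_image_le.trans (by simp), fun ω => nearestPoint_mem_image y (V ω)⟩))
  filter_upwards [hsq_eq, hties] with ω hω hωties
  obtain ⟨j, hj⟩ := hWy ω
  rw [← hj] at hω ⊢
  exact (nearestPoint_eq_of_norm_sub_le y hωties
    ((sq_eq_sq₀ (norm_nonneg _) (norm_nonneg _)).1 hω).ge).symm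

variable [InnerProductSpace ℝ H] [CompleteSpace H]

theorem IsBestApprox.setIntegral_preimage_singleton (hbest : IsBestApprox P V W k)
    (hV : MemLp V 2 P) (hmeasW : Measurable W) {y : Fin k → H} (hWy : ∀ ω, W ω ∈ Set.range y)
    {j : Fin k} (hj : P (W ⁻¹' {y j}) ≠ 0) :
    ∫ ω in W ⁻¹' {y j}, V ω ∂P = P.real (W ⁻¹' {y j}) • y j := by
  classical
  set A := W ⁻¹' {y j}
  set m := ⨍ ω in A, V ω ∂P
  have hA : MeasurableSet A := hmeasW (measurableSet_singleton _)
  have hZ : ∀ ω, A.piecewise (fun _ => m) W ω ∈ Finset.univ.image (Function.update y j m) := by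
    intro ω
    by_cases hω : ω ∈ A
    · rw [Set.piecewise_eq_of_mem _ _ _ hω]
      exact Finset.mem_image.2 ⟨j, Finset.mem_univ j, Function.update_self j m y⟩
    · obtain ⟨i, hi⟩ := hWy ω
      have hij : i ≠ j := by rintro rfl; exact hω hi.symm
      rw [Set.piecewise_eq_of_notMem _ _ _ hω, ← hi]
      exact Finset.mem_image.2 ⟨i, Finset.mem_univ i, Function.update_of_ne hij m y⟩
  have hle := hbest _ (measurable_const.piecewise hA hmeasW)
    ⟨_, Finset.card_image_le.trans (by simp), hZ⟩
  have hpiece : (fun ω => ‖V ω - A.piecewise (fun _ => m) W ω‖ ^ 2)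
      = A.piecewise (fun ω => ‖V ω - m‖ ^ 2) fun ω => ‖V ω - W ω‖ ^ 2 := by
    ext ω
    by_cases hω : ω ∈ A <;> simp [hω]
  rw [hpiece] at hle
  have hWint := integrable_norm_sub_sq hV hmeasW.aestronglyMeasurable fun ω =>
    mem_image_univ_iff_mem_range.2 (hWy ω)
  have hym : y j = m := eq_setAverage_of_setIntegral_norm_sub_sq_le hV hj <|
    calc ∫ ω in A, ‖V ω - y j‖ ^ 2 ∂P = ∫ ω in A, ‖V ω - W ω‖ ^ 2 ∂P :=
          setIntegral_congr_fun hA fun ω hω => by rw [show W ω = y j from hω]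
      _ ≤ ∫ ω in A, ‖V ω - m‖ ^ 2 ∂P :=
          setIntegral_le_of_integral_le_piecewise hA hWint (integrable_norm_sub_sq hV
            aestronglyMeasurable_const fun _ => Finset.mem_singleton_self m).integrableOn hle
  rw [hym, measure_smul_setAverage _ (measure_ne_top P A)]

end BestApproximation

theorem best_approx_selfConsistent_general {H : Type*}
    [NormedAddCommGroup H] [InnerProductSpace ℝ H] [CompleteSpace H]
    [SecondCountableTopology H] [MeasurableSpace H] [BorelSpace H]
    (P : Measure Ω) [IsProbabilityMeasure P]
    (V W : Ω → H) (hmeasV : Measurable V) (hmeasW : Measurable W)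
    (hm2 : Integrable (fun ω => ‖V ω‖ ^ 2) P)
    {k : ℕ} (y : Fin k → H)
    -- `W` takes exactly the values `y 0, …, y (k-1)`
    (hWval : ∀ ω, ∃ j, W ω = y j)
    (hWsupp : ∀ j, P {ω | W ω = y j} ≠ 0)
    -- `W` is a best `k`-point approximation to `V`
    (hbest : ∀ Z : Ω → H, Measurable Z →
      (∃ S : Finset H, S.card ≤ k ∧ ∀ ω, Z ω ∈ S) →
      (∫ ω, ‖V ω - W ω‖ ^ 2 ∂P) ≤ ∫ ω, ‖V ω - Z ω‖ ^ 2 ∂P)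
    -- the boundaries of the domains of attraction are null for `V`
    (hbd : P {ω | ∃ i j, i ≠ j ∧ ‖V ω - y i‖ = ‖V ω - y j‖} = 0) :
    (∀ᵐ ω ∂P, W ω
        = ∑ j, (attractionDomain y j).indicator (fun _ => y j) (V ω)) ∧
    (∀ᵐ ω ∂P, ∀ j, ‖V ω - W ω‖ ≤ ‖V ω - y j‖) ∧
    (P[V | MeasurableSpace.comap W inferInstance] =ᵐ[P] W) := by
  classical
  obtain ⟨ω₀⟩ := nonempty_of_isProbabilityMeasure P
  have : NeZero k := NeZero.of_pos (hWval ω₀).choose.pos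
  have hV : MemLp V 2 P := (memLp_two_iff_integrable_sq_norm hmeasV.aestronglyMeasurable).2 hm2
  have hbest' : IsBestApprox P V W k := hbest
  have hWy : ∀ ω, W ω ∈ Set.range y := fun ω => (hWval ω).imp fun _ => Eq.symm
  have hnearest := hbest'.ae_eq_nearestPoint hV hmeasV hmeasW hWy
    (measure_eq_zero_iff_ae_notMem.1 hbd)
  refine ⟨hnearest, ?_, condExp_comap_eq_of_setIntegral_preimage_singleton
    (hV.integrable one_le_two) hmeasW (fun ω => mem_image_univ_iff_mem_range.2 (hWy ω)) ?_⟩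
  · filter_upwards [hnearest] with ω hω j
    rw [hω]
    exact norm_sub_nearestPoint_le y (V ω) j
  · simpa using fun j => hbest'.setIntegral_preimage_singleton hV hmeasW hWy (hWsupp j)

/-- Properties of a best `k`-point approximation `W` to `V`: (a) `W = ∑ⱼ yⱼ 1_{V ∈ Dⱼ}` a.s.;
(b) `‖V − W‖ ≤ ‖V − yⱼ‖` a.s. for every `j`; (c) `E(V | W) = W` a.s. -/
theorem best_approx_selfConsistent {H : Type*}
    [NormedAddCommGroup H] [InnerProductSpace ℝ H] [CompleteSpace H]
    [SecondCountableTopology H] [MeasurableSpace H] [BorelSpace H]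
    (P : Measure Ω) [IsProbabilityMeasure P]
    (V W : Ω → H) (hmeasV : Measurable V) (hmeasW : Measurable W)
    (hIntV : Integrable V P)
    (hm2 : Integrable (fun ω => ‖V ω‖ ^ 2) P)
    {k : ℕ} (y : Fin k → H) (hy : Function.Injective y)
    -- `W` takes exactly the values `y 0, …, y (k-1)`
    (hWval : ∀ ω, ∃ j, W ω = y j)
    (hWsupp : ∀ j, P {ω | W ω = y j} ≠ 0)
    -- `W` is a best `k`-point approximation to `V`
    (hbest : ∀ Z : Ω → H, Measurable Z →
      (∃ S : Finset H, S.card ≤ k ∧ ∀ ω, Z ω ∈ S) →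
      (∫ ω, ‖V ω - W ω‖ ^ 2 ∂P) ≤ ∫ ω, ‖V ω - Z ω‖ ^ 2 ∂P)
    -- the boundaries of the domains of attraction are null for `V`
    (hbd : P {ω | ∃ i j, i ≠ j ∧ ‖V ω - y i‖ = ‖V ω - y j‖} = 0) :
    (∀ᵐ ω ∂P, W ω
        = ∑ j, (attractionDomain y j).indicator (fun _ => y j) (V ω)) ∧
    (∀ᵐ ω ∂P, ∀ j, ‖V ω - W ω‖ ≤ ‖V ω - y j‖) ∧
    (P[V | MeasurableSpace.comap W inferInstance] =ᵐ[P] W) :=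
  best_approx_selfConsistent_general P V W hmeasV hmeasW hm2 y hWval hWsupp hbest hbd
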